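/- arXiv:2405.12524 — 5 statements merged into one kernel-verified Lean document; each statement's English description precedes it below -/
import Mathlib

section
/- Let E be a finite-dimensional real normed vector space, L : E → E a continuous linear map with operator norm ‖L‖ ≤ Λ, and Δt > 0 such that A := id − Δt·L is invertible with ‖A⁻¹‖ ≤ κ₁. Suppose F̃ₚ, F̃, Fₚ, F', Q̃, Q, R ∈ E satisfy: (i) the exact Crank–Nicolson Leap-Frog relation A F̃ = (id + Δt·L) F̃ₚ + 2Δt Q̃; (ii) the recompression residual bound ‖R − ((id + Δt·L) Fₚ + 2Δt Q)‖ ≤ ε_b; (iii) the inexact-solver residual bound ‖A F' − R‖ ≤ ε_d. Then ‖F̃ − F'‖ ≤ ‖F̃ₚ − Fₚ‖ + 2Δt κ₁ (Λ ‖F̃ₚ − Fₚ‖ + ‖Q̃ − Q‖) + κ₁ (ε_b + ε_d). -/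
/-! Since `id + Δt • L = A + 2Δt • L`, the exact step and the two residuals give
`A (F̃ - F' - (F̃ₚ - Fₚ)) = 2Δt • (L (F̃ₚ - Fₚ) + (Q̃ - Q))` up to the recompression and solver
residuals. Applying the left inverse `B` of `A` bounds `F̃ - F' - (F̃ₚ - Fₚ)` by `κ₁` times the
norm of that right-hand side, and the triangle inequality finishes. -/

theorem norm_le_mul_norm_apply_of_comp_eq_id {𝕜 E F : Type*} [NontriviallyNormedField 𝕜]
    [SeminormedAddCommGroup E] [NormedSpace 𝕜 E] [SeminormedAddCommGroup F] [NormedSpace 𝕜 F]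
    {A : E →L[𝕜] F} {B : F →L[𝕜] E} {κ : ℝ} (hBA : B.comp A = ContinuousLinearMap.id 𝕜 E)
    (hκ : ‖B‖ ≤ κ) (x : E) : ‖x‖ ≤ κ * ‖A x‖ :=
  calc ‖x‖ = ‖B (A x)‖ := by
        rw [← ContinuousLinearMap.comp_apply, hBA, ContinuousLinearMap.id_apply]
    _ ≤ ‖B‖ * ‖A x‖ := B.le_opNorm _
    _ ≤ κ * ‖A x‖ := by gcongr

theorem crankNicolson_apply_sub_sub_eq {𝕜 E : Type*} [NormedField 𝕜]
    [SeminormedAddCommGroup E] [NormedSpace 𝕜 E] {L A : E →L[𝕜] E} {τ : 𝕜}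
    (hA : A = ContinuousLinearMap.id 𝕜 E - τ • L) {Ftp Fte Fp F' Qt Q R : E}
    (hexact : A Fte = (ContinuousLinearMap.id 𝕜 E + τ • L) Ftp + (2 * τ) • Qt) :
    A (Fte - F' - (Ftp - Fp)) = (2 * τ) • (L (Ftp - Fp) + (Qt - Q))
      - (R - ((ContinuousLinearMap.id 𝕜 E + τ • L) Fp + (2 * τ) • Q)) - (A F' - R) := by
  rw [map_sub, map_sub, hexact, hA]
  simp only [sub_apply, add_apply, smul_apply, ContinuousLinearMap.id_apply, map_sub]
  module

theorem norm_smul_add_sub_sub_le {E : Type*} [SeminormedAddCommGroup E] [NormedSpace ℝ E]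
    {L : E →L[ℝ] E} {Λ τ : ℝ} (hΛ : ‖L‖ ≤ Λ) (hτ : 0 ≤ τ) (u q w₁ w₂ : E) :
    ‖τ • (L u + q) - w₁ - w₂‖ ≤ τ * (Λ * ‖u‖ + ‖q‖) + (‖w₁‖ + ‖w₂‖) := by
  have hLu : ‖L u‖ ≤ Λ * ‖u‖ := L.le_of_opNorm_le hΛ u
  calc ‖τ • (L u + q) - w₁ - w₂‖ ≤ ‖τ • (L u + q) - w₁‖ + ‖w₂‖ := norm_sub_le _ _
    _ ≤ ‖τ • (L u + q)‖ + ‖w₁‖ + ‖w₂‖ := by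
        gcongr
        exact norm_sub_le _ _
    _ ≤ τ * (‖L u‖ + ‖q‖) + ‖w₁‖ + ‖w₂‖ := by
        rw [norm_smul, Real.norm_of_nonneg hτ]
        gcongr
        exact norm_add_le _ _
    _ ≤ τ * (Λ * ‖u‖ + ‖q‖) + (‖w₁‖ + ‖w₂‖) := by
        rw [add_assoc]
        gcongr

theorem aptt_one_step_error_general
    {E : Type*} [NormedAddCommGroup E] [NormedSpace ℝ E]
    (L A B : E →L[ℝ] E) (Λ κ₁ Δt εb εd : ℝ)
    (hΛ : ‖L‖ ≤ Λ) (hΔt : 0 < Δt)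
    (hA : A = ContinuousLinearMap.id ℝ E - Δt • L)
    (hBA : B.comp A = ContinuousLinearMap.id ℝ E)
    (hκ₁ : ‖B‖ ≤ κ₁)
    (Ftp Fte Fp F' Qt Q R : E)
    (hexact : A Fte = (ContinuousLinearMap.id ℝ E + Δt • L) Ftp + (2 * Δt) • Qt)
    (hrec : ‖R - ((ContinuousLinearMap.id ℝ E + Δt • L) Fp + (2 * Δt) • Q)‖ ≤ εb)
    (hsolve : ‖A F' - R‖ ≤ εd) :
    ‖Fte - F'‖ ≤ ‖Ftp - Fp‖ + 2 * Δt * κ₁ * (Λ * ‖Ftp - Fp‖ + ‖Qt - Q‖)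
      + κ₁ * (εb + εd) := by
  have hκ₁_nonneg : 0 ≤ κ₁ := (norm_nonneg B).trans hκ₁
  have hdefect : ‖A (Fte - F' - (Ftp - Fp))‖
      ≤ 2 * Δt * (Λ * ‖Ftp - Fp‖ + ‖Qt - Q‖) + (εb + εd) := by
    rw [crankNicolson_apply_sub_sub_eq (R := R) (Q := Q) hA hexact]
    refine (norm_smul_add_sub_sub_le hΛ (by positivity) _ _ _ _).trans ?_
    gcongr
  calc ‖Fte - F'‖ ≤ ‖Ftp - Fp‖ + ‖Fte - F' - (Ftp - Fp)‖ := norm_le_insert' _ _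
    _ ≤ ‖Ftp - Fp‖ + κ₁ * ‖A (Fte - F' - (Ftp - Fp))‖ := by
        gcongr
        exact norm_le_mul_norm_apply_of_comp_eq_id hBA hκ₁ _
    _ ≤ ‖Ftp - Fp‖ + κ₁ * (2 * Δt * (Λ * ‖Ftp - Fp‖ + ‖Qt - Q‖) + (εb + εd)) := by
        gcongr
    _ = ‖Ftp - Fp‖ + 2 * Δt * κ₁ * (Λ * ‖Ftp - Fp‖ + ‖Qt - Q‖) + κ₁ * (εb + εd) := by ring

/-- One-step error-propagation estimate for the APTT method applied to the CNLF
discretization of the Boltzmann-BGK equation. -/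
theorem aptt_one_step_error
    {E : Type*} [NormedAddCommGroup E] [NormedSpace ℝ E] [FiniteDimensional ℝ E]
    (L A B : E →L[ℝ] E) (Λ κ₁ Δt εb εd : ℝ)
    (hΛ : ‖L‖ ≤ Λ) (hΔt : 0 < Δt)
    (hA : A = ContinuousLinearMap.id ℝ E - Δt • L)
    (hBA : B.comp A = ContinuousLinearMap.id ℝ E)
    (hAB : A.comp B = ContinuousLinearMap.id ℝ E)
    (hκ₁ : ‖B‖ ≤ κ₁)
    (Ftp Fte Fp F' Qt Q R : E)
    (hexact : A Fte = (ContinuousLinearMap.id ℝ E + Δt • L) Ftp + (2 * Δt) • Qt)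
    (hrec : ‖R - ((ContinuousLinearMap.id ℝ E + Δt • L) Fp + (2 * Δt) • Q)‖ ≤ εb)
    (hsolve : ‖A F' - R‖ ≤ εd) :
    ‖Fte - F'‖ ≤ ‖Ftp - Fp‖ + 2 * Δt * κ₁ * (Λ * ‖Ftp - Fp‖ + ‖Qt - Q‖)
      + κ₁ * (εb + εd) :=
  aptt_one_step_error_general L A B Λ κ₁ Δt εb εd hΛ hΔt hA hBA hκ₁ Ftp Fte Fp F' Qt Q R hexact hrec
    hsolve
end

section
/- Let a : ℕ → ℝ be a sequence of nonnegative reals, and let β ≥ 0 and δ ≥ 0 be such that a(n+1) ≤ a(n−1) + β·(a(n−1) + a(n)) + δ for every n ≥ 1. Then for every n, a(n) ≤ (1 + 2β)ⁿ · (max(a(0), a(1)) + n·δ). -/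
/-!
The pairwise maxima `b n = max (a n) (a (n+1))` satisfy the one-step recursion
`b (n+1) ≤ (1 + 2β) b n + δ`, and iterating a one-step linear recursion with factor `q ≥ 1`
loses at most a factor `qⁿ` on each of the `n` added increments `δ`.
-/

theorem le_pow_mul_add_of_le_mul_add {R : Type*} [CommSemiring R] [PartialOrder R]
    [IsOrderedRing R] {u : ℕ → R} {q δ : R} (hq : 1 ≤ q) (hδ : 0 ≤ δ)
    (hu : ∀ n, u (n + 1) ≤ q * u n + δ) (n : ℕ) : u n ≤ q ^ n * (u 0 + n * δ) := by
  induction n with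
  | zero => simp
  | succ n ih =>
    have hδ_le : δ ≤ q ^ (n + 1) * δ := le_mul_of_one_le_left hδ (one_le_pow₀ hq)
    calc u (n + 1) ≤ q * u n + δ := hu n
      _ ≤ q * (q ^ n * (u 0 + n * δ)) + q ^ (n + 1) * δ := by
        gcongr
        exact zero_le_one.trans hq
      _ = q ^ (n + 1) * (u 0 + (n + 1 : ℕ) * δ) := by push_cast; ring

theorem max_le_one_add_two_mul_max_add {x y z β δ : ℝ} (hx : 0 ≤ x) (hβ : 0 ≤ β) (hδ : 0 ≤ δ)
    (hz : z ≤ x + β * (x + y) + δ) : max y z ≤ (1 + 2 * β) * max x y + δ := by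
  have hxm : x ≤ max x y := le_max_left x y
  have hym : y ≤ max x y := le_max_right x y
  refine max_le ?_ ?_ <;> nlinarith

/-- Two-step discrete Gronwall-type inequality used in the global error analysis of
the APTT method: if `a (n+1) ≤ a (n-1) + β (a (n-1) + a n) + δ` for all `n ≥ 1`,
then `a n ≤ (1 + 2β)^n (max (a 0) (a 1) + n δ)`. -/
theorem two_step_gronwall (a : ℕ → ℝ) (β δ : ℝ)
    (ha : ∀ n, 0 ≤ a n) (hβ : 0 ≤ β) (hδ : 0 ≤ δ)
    (hrec : ∀ n : ℕ, 1 ≤ n → a (n + 1) ≤ a (n - 1) + β * (a (n - 1) + a n) + δ) :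
    ∀ n : ℕ, a n ≤ (1 + 2 * β) ^ n * (max (a 0) (a 1) + (n : ℝ) * δ) := by
  have hmax_step (n : ℕ) :
      max (a (n + 1)) (a (n + 2)) ≤ (1 + 2 * β) * max (a n) (a (n + 1)) + δ :=
    max_le_one_add_two_mul_max_add (ha n) hβ hδ (by simpa using hrec (n + 1) (by omega))
  intro n
  calc a n ≤ max (a n) (a (n + 1)) := le_max_left _ _
    _ ≤ (1 + 2 * β) ^ n * (max (a 0) (a 1) + n * δ) :=
      le_pow_mul_add_of_le_mul_add (u := fun n ↦ max (a n) (a (n + 1))) (by linarith) hδ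
        hmax_step n
end

section
/- Let C > 0, ϖ > 0, t⋆ > 0 be real constants. There exists a constant C' > 0, depending only on C, ϖ and t⋆, with the following property: for every Δt with 0 < Δt ≤ 1 and every sequence ε : ℕ → ℝ of nonnegative reals satisfying ε(0) ≤ (Δt)^{1+ϖ}, ε(1) ≤ (Δt)^{1+ϖ}, and ε(n+1) ≤ ε(n−1) + C·Δt·(ε(n−1) + ε(n) + (Δt)^{1+ϖ}) + 2C·(Δt)^{1+ϖ} for all n ≥ 1, one has ε(n) ≤ C'·(Δt)^{ϖ} for every n with n·Δt ≤ t⋆. -/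
/-!
A discrete Grönwall argument. Writing `D = Δt^(1+ϖ)`, the recursion reads
`ε (n+2) ≤ (1 + a) ε n + a ε (n+1) + b` with `a = C Δt` and `b = C D (Δt + 2) ≤ 3 C D`.
Since the two previous errors enter with total weight `1 + 2a`, induction gives
`ε n ≤ (1 + 2a)^n (D + n b)`. On `n Δt ≤ t⋆` the amplification `(1 + 2 C Δt)^n` is at most
`exp (2 C t⋆)`, while `D + n b ≤ Δt^ϖ (Δt + 3 C n Δt) ≤ Δt^ϖ (1 + 3 C t⋆)`: the local defect
`Δt^(1+ϖ)` loses exactly one power of `Δt` over the `t⋆ / Δt` steps.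
-/

open Real

def twoStepGronwallBound (a b δ : ℝ) (n : ℕ) : ℝ :=
  (1 + 2 * a) ^ n * (δ + n * b)

section TwoStepGronwall

variable {a b δ : ℝ}

@[simp]
lemma twoStepGronwallBound_zero : twoStepGronwallBound a b δ 0 = δ := by
  simp [twoStepGronwallBound]

lemma twoStepGronwallBound_le_succ (ha : 0 ≤ a) (hb : 0 ≤ b) (hδ : 0 ≤ δ) (n : ℕ) :
    twoStepGronwallBound a b δ n ≤ twoStepGronwallBound a b δ (n + 1) := by
  unfold twoStepGronwallBound
  have hpow : (1 + 2 * a) ^ n ≤ (1 + 2 * a) ^ (n + 1) :=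
    pow_le_pow_right₀ (by linarith) n.le_succ
  push_cast
  gcongr
  linarith

lemma twoStepGronwallBound_step (ha : 0 ≤ a) (hb : 0 ≤ b) (hδ : 0 ≤ δ) (n : ℕ) :
    (1 + a) * twoStepGronwallBound a b δ n + a * twoStepGronwallBound a b δ (n + 1) + b ≤
      twoStepGronwallBound a b δ (n + 2) := by
  have hmono := twoStepGronwallBound_le_succ ha hb hδ n
  have hpow : 1 ≤ (1 + 2 * a) ^ (n + 2) := one_le_pow₀ (by linarith)
  calc (1 + a) * twoStepGronwallBound a b δ n + a * twoStepGronwallBound a b δ (n + 1) + b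
      ≤ (1 + 2 * a) * twoStepGronwallBound a b δ (n + 1) + (1 + 2 * a) ^ (n + 2) * b := by
        nlinarith
    _ = twoStepGronwallBound a b δ (n + 2) := by
        unfold twoStepGronwallBound
        push_cast
        ring

theorem le_twoStepGronwallBound (ha : 0 ≤ a) (hb : 0 ≤ b) (hδ : 0 ≤ δ) {ε : ℕ → ℝ}
    (h0 : ε 0 ≤ δ) (h1 : ε 1 ≤ δ)
    (hrec : ∀ n, ε (n + 2) ≤ (1 + a) * ε n + a * ε (n + 1) + b) (n : ℕ) :
    ε n ≤ twoStepGronwallBound a b δ n := by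
  induction n using Nat.twoStepInduction with
  | zero => simpa using h0
  | one => exact h1.trans (by simpa using twoStepGronwallBound_le_succ ha hb hδ 0)
  | more n ihn ihn1 =>
    calc ε (n + 2) ≤ (1 + a) * ε n + a * ε (n + 1) + b := hrec n
      _ ≤ (1 + a) * twoStepGronwallBound a b δ n + a * twoStepGronwallBound a b δ (n + 1) + b := by
        gcongr
      _ ≤ twoStepGronwallBound a b δ (n + 2) := twoStepGronwallBound_step ha hb hδ n

end TwoStepGronwall

lemma one_add_pow_le_exp_mul {x : ℝ} (hx : 0 ≤ x) (n : ℕ) : (1 + x) ^ n ≤ exp (n * x) := by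
  rw [exp_nat_mul]
  gcongr
  linarith [add_one_le_exp x]

theorem aptt_global_rate_general (C ϖ tstar : ℝ) (hC : 0 < C) (ht : 0 < tstar) :
    ∃ C' : ℝ, 0 < C' ∧
      ∀ Δt : ℝ, 0 < Δt → Δt ≤ 1 →
        ∀ ε : ℕ → ℝ, (∀ n, 0 ≤ ε n) →
          ε 0 ≤ Δt ^ (1 + ϖ) → ε 1 ≤ Δt ^ (1 + ϖ) →
          (∀ n : ℕ, 1 ≤ n →
            ε (n + 1) ≤ ε (n - 1) + C * Δt * (ε (n - 1) + ε n + Δt ^ (1 + ϖ))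
              + 2 * C * Δt ^ (1 + ϖ)) →
          ∀ n : ℕ, (n : ℝ) * Δt ≤ tstar → ε n ≤ C' * Δt ^ ϖ := by
  refine ⟨exp (2 * C * tstar) * (1 + 3 * C * tstar), by positivity, ?_⟩
  intro Δt hΔ hΔ1 ε _ h0 h1 hrec n hn
  have hD : Δt ^ (1 + ϖ) = Δt * Δt ^ ϖ := by rw [rpow_add hΔ, rpow_one]
  have hpos : 0 < Δt ^ ϖ := rpow_pos_of_pos hΔ ϖ
  have hgron := le_twoStepGronwallBound (a := C * Δt) (b := C * Δt ^ (1 + ϖ) * (Δt + 2))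
    (by positivity) (by positivity) (by positivity) h0 h1
    (fun k ↦ by
      have := hrec (k + 1) k.succ_pos
      rw [Nat.add_sub_cancel] at this
      linarith) n
  have hamp : (1 + 2 * (C * Δt)) ^ n ≤ exp (2 * C * tstar) :=
    (one_add_pow_le_exp_mul (by positivity) n).trans (exp_le_exp.2 (by nlinarith))
  have hdefect : Δt ^ (1 + ϖ) + n * (C * Δt ^ (1 + ϖ) * (Δt + 2)) ≤
      (1 + 3 * C * tstar) * Δt ^ ϖ := by
    rw [hD]
    nlinarith [mul_le_mul_of_nonneg_left hn (by positivity : 0 ≤ 3 * C * Δt ^ ϖ),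
      mul_le_mul_of_nonneg_right hΔ1 (by positivity : 0 ≤ C * Δt ^ ϖ * ((n : ℝ) * Δt))]
  calc ε n ≤ (1 + 2 * (C * Δt)) ^ n * (Δt ^ (1 + ϖ) + n * (C * Δt ^ (1 + ϖ) * (Δt + 2))) := hgron
    _ ≤ exp (2 * C * tstar) * ((1 + 3 * C * tstar) * Δt ^ ϖ) := by gcongr
    _ = exp (2 * C * tstar) * (1 + 3 * C * tstar) * Δt ^ ϖ := by ring

/-- Global convergence-rate statement of Theorem 2 of the paper: with tolerances
`ε_b = ε_d = Δt^(1+ϖ)`, the error sequence of the APTT method obeying the two-step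
recursion is of order `Δt^ϖ` uniformly on `[0, t⋆]`. -/
theorem aptt_global_rate (C ϖ tstar : ℝ) (hC : 0 < C) (hϖ : 0 < ϖ) (ht : 0 < tstar) :
    ∃ C' : ℝ, 0 < C' ∧
      ∀ Δt : ℝ, 0 < Δt → Δt ≤ 1 →
        ∀ ε : ℕ → ℝ, (∀ n, 0 ≤ ε n) →
          ε 0 ≤ Δt ^ (1 + ϖ) → ε 1 ≤ Δt ^ (1 + ϖ) →
          (∀ n : ℕ, 1 ≤ n →
            ε (n + 1) ≤ ε (n - 1) + C * Δt * (ε (n - 1) + ε n + Δt ^ (1 + ϖ))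
              + 2 * C * Δt ^ (1 + ϖ)) →
          ∀ n : ℕ, (n : ℝ) * Δt ≤ tstar → ε n ≤ C' * Δt ^ ϖ :=
  aptt_global_rate_general C ϖ tstar hC ht
end

section
/- Let ι be a finite type, let ρ₀ > 0 and ρ̲ > 0, and let g, g̃, ρ, ρ̃ : ι → ℝ satisfy ρ(k) ≥ ρ₀ and ρ̃(k) ≥ ρ̲ for all k. Then √(Σ_k (g̃(k)/ρ̃(k) − g(k)/ρ(k))²) ≤ (max_k |g̃(k)| / (ρ̲·ρ₀)) · √(Σ_k (ρ̃(k) − ρ(k))²) + (1/ρ₀) · √(Σ_k (g̃(k) − g(k))²). -/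
open scoped BigOperators

section EuclideanSum

variable {ι : Type*} [Fintype ι]

lemma sqrt_sum_sq_eq_norm_toLp (u : ι → ℝ) :
    √(∑ k, u k ^ 2) = ‖(WithLp.toLp 2 u : EuclideanSpace ℝ ι)‖ := by
  simp [EuclideanSpace.norm_eq, Real.norm_eq_abs, sq_abs]

lemma sqrt_sum_sq_le_of_abs_le {u v w : ι → ℝ} {α β : ℝ} (hα : 0 ≤ α) (hβ : 0 ≤ β)
    (h : ∀ k, |u k| ≤ α * |v k| + β * |w k|) :
    √(∑ k, u k ^ 2) ≤ α * √(∑ k, v k ^ 2) + β * √(∑ k, w k ^ 2) := by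
  let V : EuclideanSpace ℝ ι := WithLp.toLp 2 fun k => |v k|
  let W : EuclideanSpace ℝ ι := WithLp.toLp 2 fun k => |w k|
  have hsq : ∀ k, u k ^ 2 ≤ (α * |v k| + β * |w k|) ^ 2 := fun k => by
    simpa only [sq_abs] using pow_le_pow_left₀ (abs_nonneg _) (h k) 2
  calc √(∑ k, u k ^ 2) ≤ √(∑ k, (α * |v k| + β * |w k|) ^ 2) :=
        Real.sqrt_le_sqrt (Finset.sum_le_sum fun k _ => hsq k)
    _ = ‖α • V + β • W‖ := sqrt_sum_sq_eq_norm_toLp _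
    _ ≤ α * ‖V‖ + β * ‖W‖ := by
        refine (norm_add_le _ _).trans_eq ?_
        rw [norm_smul, norm_smul, Real.norm_of_nonneg hα, Real.norm_of_nonneg hβ]
    _ = α * √(∑ k, v k ^ 2) + β * √(∑ k, w k ^ 2) := by
        simp only [V, W, ← sqrt_sum_sq_eq_norm_toLp, sq_abs]

end EuclideanSum

lemma abs_div_sub_div_le {a b c d M β δ : ℝ} (hβ : 0 < β) (hδ : 0 < δ)
    (ha : |a| ≤ M) (hb : β ≤ b) (hd : δ ≤ d) :
    |a / b - c / d| ≤ M / (β * δ) * |b - d| + 1 / δ * |a - c| := by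
  have hb₀ : 0 < b := hβ.trans_le hb
  have hd₀ : 0 < d := hδ.trans_le hd
  have hsplit : a / b - c / d = a * (d - b) / (b * d) + (a - c) / d := by
    field_simp
    ring
  calc |a / b - c / d| ≤ |a| * |b - d| / (b * d) + |a - c| / d := by
        rw [hsplit, abs_sub_comm b]
        refine (abs_add_le _ _).trans_eq ?_
        rw [abs_div, abs_mul, abs_div, abs_of_pos (mul_pos hb₀ hd₀), abs_of_pos hd₀]
    _ ≤ M * |b - d| / (β * δ) + |a - c| / δ := by
        have : 0 ≤ M * |b - d| := mul_nonneg ((abs_nonneg a).trans ha) (abs_nonneg _)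
        gcongr
    _ = M / (β * δ) * |b - d| + 1 / δ * |a - c| := by ring

theorem mean_velocity_stability_general {ι : Type*} [Fintype ι]
    (ρ₀ ρlo : ℝ) (hρ₀ : 0 < ρ₀) (hρlo : 0 < ρlo)
    (g gt ρ ρt : ι → ℝ)
    (hρ : ∀ k, ρ₀ ≤ ρ k) (hρt : ∀ k, ρlo ≤ ρt k) :
    Real.sqrt (∑ k, (gt k / ρt k - g k / ρ k) ^ 2)
      ≤ ((⨆ k, |gt k|) / (ρlo * ρ₀)) * Real.sqrt (∑ k, (ρt k - ρ k) ^ 2)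
        + (1 / ρ₀) * Real.sqrt (∑ k, (gt k - g k) ^ 2) := by
  have hM : ∀ k, |gt k| ≤ ⨆ k, |gt k| := le_ciSup (Set.finite_range _).bddAbove
  have hM₀ : 0 ≤ ⨆ k, |gt k| := Real.iSup_nonneg fun k => abs_nonneg _
  exact sqrt_sum_sq_le_of_abs_le (by positivity) (by positivity)
    fun k => abs_div_sub_div_le hρlo hρ₀ (hM k) (hρt k) (hρ k)

/-- Stability estimate for the discrete mean velocity `U = (ρ⊙U)/ρ` used in the
proof of Theorem 1 of the paper. -/
theorem mean_velocity_stability {ι : Type*} [Fintype ι] [Nonempty ι]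
    (ρ₀ ρlo : ℝ) (hρ₀ : 0 < ρ₀) (hρlo : 0 < ρlo)
    (g gt ρ ρt : ι → ℝ)
    (hρ : ∀ k, ρ₀ ≤ ρ k) (hρt : ∀ k, ρlo ≤ ρt k) :
    Real.sqrt (∑ k, (gt k / ρt k - g k / ρ k) ^ 2)
      ≤ ((⨆ k, |gt k|) / (ρlo * ρ₀)) * Real.sqrt (∑ k, (ρt k - ρ k) ^ 2)
        + (1 / ρ₀) * Real.sqrt (∑ k, (gt k - g k) ^ 2) :=
  mean_velocity_stability_general ρ₀ ρlo hρ₀ hρlo g gt ρ ρt hρ hρt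
end

section
/- Let α and β be finite types, let 𝕃 be a linear endomorphism of the space of functions (α × β) → ℝ such that for every G : (α × β) → ℝ and every l ∈ β, Σ_{k ∈ α} (𝕃G)(k, l) = 0. Let φ : β → ℝ, let Δt ∈ ℝ, and let Q : (α × β) → ℝ satisfy Σ_{l ∈ β} Q(k, l)·φ(l) = 0 for every k ∈ α. If F, F' : (α × β) → ℝ satisfy F' − Δt·(𝕃F') = F + Δt·(𝕃F) + 2Δt·Q, then Σ_{k, l} F'(k, l)·φ(l) = Σ_{k, l} F(k, l)·φ(l). -/
/-!
Pairing with the collision invariant, `G ↦ Σ_{k,l} G(k,l) φ(l)`, is a linear functional.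
It kills every transport term `𝕃 G` (sum over space first) and the collision term `Q`
(sum over velocities first), so applying it to the scheme leaves only `Σ F' φ = Σ F φ`.
-/

section Moment

variable {R α β : Type*} [CommSemiring R] [Fintype α] [Fintype β]

def moment (φ : β → R) : ((α × β) → R) →ₗ[R] R where
  toFun G := ∑ p, G p * φ p.2
  map_add' G H := by simp only [Pi.add_apply, add_mul, Finset.sum_add_distrib]
  map_smul' c G := by simp only [Pi.smul_apply, smul_eq_mul, mul_assoc, ← Finset.mul_sum,
    RingHom.id_apply]

theorem moment_apply (φ : β → R) (G : (α × β) → R) :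
    moment φ G = ∑ p, G p * φ p.2 := rfl

theorem moment_eq_zero_of_sum_fst_eq_zero (φ : β → R) {G : (α × β) → R}
    (hG : ∀ l, ∑ k, G (k, l) = 0) : moment φ G = 0 := by
  rw [moment_apply, Fintype.sum_prod_type_right]
  simp only [← Finset.sum_mul, hG, zero_mul, Finset.sum_const_zero]

theorem moment_eq_zero_of_sum_snd_eq_zero (φ : β → R) {G : (α × β) → R}
    (hG : ∀ k, ∑ l, G (k, l) * φ l = 0) : moment φ G = 0 := by
  rw [moment_apply, Fintype.sum_prod_type]
  simp only [hG, Finset.sum_const_zero]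

end Moment

/-- Abstract form of the exact discrete conservation laws (Theorem 3) for one step
of the Crank–Nicolson Leap-Frog scheme `(I − Δt𝕃)F' = (I + Δt𝕃)F + 2ΔtQ`:
if the discrete transport operator `𝕃` has vanishing spatial sums and the discrete
collision term `Q` annihilates the collision invariant `φ`, then the discrete
moment `Σ F φ` is conserved. -/
theorem cnlf_conservation {α β : Type*} [Fintype α] [Fintype β]
    (𝕃 : ((α × β) → ℝ) →ₗ[ℝ] ((α × β) → ℝ))
    (h𝕃 : ∀ G : (α × β) → ℝ, ∀ l : β, ∑ k : α, (𝕃 G) (k, l) = 0)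
    (φ : β → ℝ) (Δt : ℝ) (Q : (α × β) → ℝ)
    (hQ : ∀ k : α, ∑ l : β, Q (k, l) * φ l = 0)
    (F F' : (α × β) → ℝ)
    (hstep : F' - Δt • 𝕃 F' = F + Δt • 𝕃 F + (2 * Δt) • Q) :
    ∑ p : α × β, F' p * φ p.2 = ∑ p : α × β, F p * φ p.2 := by
  have h𝕃φ : ∀ G, moment φ (𝕃 G) = 0 := fun G =>
    moment_eq_zero_of_sum_fst_eq_zero φ (h𝕃 G)
  have hQφ : moment φ Q = 0 := moment_eq_zero_of_sum_snd_eq_zero φ hQ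
  have h := congrArg (moment φ) hstep
  simp only [map_sub, map_add, map_smul, h𝕃φ, hQφ, smul_zero, sub_zero, add_zero] at h
  exact h
end
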